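/- arXiv:1305.5311 — 3 statements merged into one kernel-verified Lean document; each statement's English description precedes it below -/
import Mathlib

section
/- The (2n+m)×(2n+m) matrix N = [[A, 0, B], [Q, −I_n, S], [Sᵀ, 0, R]] is singular if and only if at least one of the two matrices R and A − B R† Sᵀ is singular, where † denotes the Moore–Penrose pseudoinverse. -/
open Matrix

-- The Moore–Penrose pseudoinverse of a real matrix, characterised by the four
-- Penrose equations (it exists and is unique for every real matrix).
open Classical in
noncomputable def mpinv {α β : Type*} [Fintype α] [Fintype β]
    (M : Matrix α β ℝ) : Matrix β α ℝ :=
  if h : ∃ P : Matrix β α ℝ,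
      M * P * M = M ∧ P * M * P = P ∧ (M * P)ᵀ = M * P ∧ (P * M)ᵀ = P * M
  then h.choose else 0

/-- `R_X = R + BᵀXB`. -/
noncomputable def RX {ι κ : Type*} [Fintype ι] [Fintype κ]
    (R : Matrix κ κ ℝ) (B : Matrix ι κ ℝ) (X : Matrix ι ι ℝ) : Matrix κ κ ℝ :=
  R + Bᵀ * X * B

/-- `S_X = AᵀXB + S`. -/
noncomputable def SX {ι κ : Type*} [Fintype ι] [Fintype κ]
    (A : Matrix ι ι ℝ) (B S : Matrix ι κ ℝ) (X : Matrix ι ι ℝ) : Matrix ι κ ℝ :=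
  Aᵀ * X * B + S

/-- `K_X = R_X† S_Xᵀ`. -/
noncomputable def KX {ι κ : Type*} [Fintype ι] [Fintype κ]
    (A : Matrix ι ι ℝ) (B S : Matrix ι κ ℝ) (R : Matrix κ κ ℝ) (X : Matrix ι ι ℝ) :
    Matrix κ ι ℝ :=
  mpinv (RX R B X) * (SX A B S X)ᵀ

/-- The closed-loop matrix `A_X = A - B K_X`. -/
noncomputable def AX {ι κ : Type*} [Fintype ι] [Fintype κ]
    (A : Matrix ι ι ℝ) (B S : Matrix ι κ ℝ) (R : Matrix κ κ ℝ) (X : Matrix ι ι ℝ) :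
    Matrix ι ι ℝ :=
  A - B * KX A B S R X

/-- The kernel condition `ker R_X ⊆ ker S_X`. -/
def KerCond {ι κ : Type*} [Fintype ι] [Fintype κ]
    (A : Matrix ι ι ℝ) (B S : Matrix ι κ ℝ) (R : Matrix κ κ ℝ) (X : Matrix ι ι ℝ) : Prop :=
  ∀ v : κ → ℝ, (RX R B X).mulVec v = 0 → (SX A B S X).mulVec v = 0

/-- The Riccati operator `𝔇(X) = X - AᵀXA + S_X R_X† S_Xᵀ - Q`. -/
noncomputable def DOp {ι κ : Type*} [Fintype ι] [Fintype κ]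
    (A Q : Matrix ι ι ℝ) (B S : Matrix ι κ ℝ) (R : Matrix κ κ ℝ) (X : Matrix ι ι ℝ) :
    Matrix ι ι ℝ :=
  X - Aᵀ * X * A + SX A B S X * mpinv (RX R B X) * (SX A B S X)ᵀ - Q

/-- The Riccati map `ℛ(X) = AᵀXA - S_X R_X† S_Xᵀ + Q`. -/
noncomputable def Ricc {ι κ : Type*} [Fintype ι] [Fintype κ]
    (A Q : Matrix ι ι ℝ) (B S : Matrix ι κ ℝ) (R : Matrix κ κ ℝ) (X : Matrix ι ι ℝ) :
    Matrix ι ι ℝ :=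
  Aᵀ * X * A - SX A B S X * mpinv (RX R B X) * (SX A B S X)ᵀ + Q

/-- `X` is a symmetric solution of CGDARE(Σ): it is symmetric, satisfies the GDARE and
the kernel condition `ker R_X ⊆ ker S_X`. -/
def IsCGDARESolution {ι κ : Type*} [Fintype ι] [Fintype κ]
    (A Q : Matrix ι ι ℝ) (B S : Matrix ι κ ℝ) (R : Matrix κ κ ℝ) (X : Matrix ι ι ℝ) : Prop :=
  Xᵀ = X ∧ X = Ricc A Q B S R X ∧ KerCond A B S R X

/-- The matrix `N = [[A, 0, B], [Q, -I, S], [Sᵀ, 0, R]]` of the extended symplectic pencil. -/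
noncomputable def Nmat {n m : ℕ} (A Q : Matrix (Fin n) (Fin n) ℝ)
    (B S : Matrix (Fin n) (Fin m) ℝ) (R : Matrix (Fin m) (Fin m) ℝ) :
    Matrix (Fin n ⊕ (Fin n ⊕ Fin m)) (Fin n ⊕ (Fin n ⊕ Fin m)) ℝ :=
  fromBlocks A (fromCols 0 B) (fromRows Q Sᵀ) (fromBlocks (-1) S 0 R)

/-- The matrix `M = [[I, 0, 0], [0, -Aᵀ, 0], [0, -Bᵀ, 0]]` of the extended symplectic pencil. -/
noncomputable def Mmat {n m : ℕ} (A : Matrix (Fin n) (Fin n) ℝ)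
    (B : Matrix (Fin n) (Fin m) ℝ) :
    Matrix (Fin n ⊕ (Fin n ⊕ Fin m)) (Fin n ⊕ (Fin n ⊕ Fin m)) ℝ :=
  fromBlocks 1 0 0 (fromBlocks (-Aᵀ) 0 (-Bᵀ) 0)

/-
Permuting the block rows and columns of `N` makes it block lower triangular with diagonal
blocks `[[A, B], [Sᵀ, R]]` and `-I`, so `N` is singular iff `[[A, B], [Sᵀ, R]]` is. If `R` is
invertible then `R† = R⁻¹`, and the Schur complement gives
`det [[A, B], [Sᵀ, R]] = det R · det (A - B R⁻¹ Sᵀ)`. If `R v = 0` with `v ≠ 0`, positive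
semidefiniteness of `Π` forces `S v = 0`, so `(0, v)` is a left null vector of `[[A, B], [Sᵀ, R]]`.
-/

theorem mpinv_eq_nonsing_inv {α : Type*} [Fintype α] [DecidableEq α] {M : Matrix α α ℝ} (hM : IsUnit M.det) : mpinv M = M⁻¹ := by
  have hpenrose : ∃ P : Matrix α α ℝ,
      M * P * M = M ∧ P * M * P = P ∧ (M * P)ᵀ = M * P ∧ (P * M)ᵀ = P * M :=
    ⟨M⁻¹, by simp [mul_nonsing_inv _ hM, nonsing_inv_mul _ hM]⟩
  rw [mpinv, dif_pos hpenrose]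
  -- `M P M = M` alone pins `P` down once `M` is invertible.
  simpa [Matrix.mul_assoc, nonsing_inv_mul_cancel_left _ _ hM,
    mul_nonsing_inv_cancel_right _ _ hM] using
    congrArg (fun X => M⁻¹ * X * M⁻¹) hpenrose.choose_spec.1

section Blocks

variable {l m : Type*} [Fintype l] [Fintype m]

theorem Matrix.PosSemidef.mulVec_eq_zero_of_fromBlocks {Q : Matrix l l ℝ} {S : Matrix l m ℝ}
    {R : Matrix m m ℝ} (hPi : (fromBlocks Q S Sᵀ R).PosSemidef) {v : m → ℝ}
    (hv : R *ᵥ v = 0) : S *ᵥ v = 0 := by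
  have hPiv : fromBlocks Q S Sᵀ R *ᵥ Sum.elim 0 v = Sum.elim (S *ᵥ v) 0 := by
    simp [fromBlocks_mulVec, hv]
  -- The quadratic form of `Π` vanishes at `(0, v)`, hence so does `Π (0, v)`.
  have hzero := (hPi.dotProduct_mulVec_zero_iff (Sum.elim 0 v)).mp (by
    simp [hPiv, sumElim_dotProduct_sumElim])
  rw [hPiv] at hzero
  exact funext fun i => congrFun hzero (Sum.inl i)

variable [DecidableEq l] [DecidableEq m]

theorem det_fromBlocks_eq_zero_of_vecMul_eq_zero {K : Type*} [CommRing K] [IsDomain K]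
    {A : Matrix l l K} {B : Matrix l m K} {C : Matrix m l K} {D : Matrix m m K}
    {v : m → K} (hv : v ≠ 0) (hC : v ᵥ* C = 0) (hD : v ᵥ* D = 0) :
    (fromBlocks A B C D).det = 0 :=
  exists_vecMul_eq_zero_iff.mp
    ⟨Sum.elim 0 v, fun h => hv (funext fun j => congrFun h (Sum.inr j)), by
      simp [vecMul_fromBlocks, hC, hD]⟩

theorem det_fromBlocks_eq_zero_iff_of_isUnit {K : Type*} [Field K]
    (A : Matrix l l K) (B : Matrix l m K) (C : Matrix m l K) {D : Matrix m m K}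
    (hD : IsUnit D.det) :
    (fromBlocks A B C D).det = 0 ↔ (A - B * D⁻¹ * C).det = 0 := by
  let := D.invertibleOfIsUnitDet hD
  rw [det_fromBlocks₂₂, invOf_eq_nonsing_inv, mul_eq_zero, or_iff_right hD.ne_zero]

theorem det_fromBlocks_eq_zero_of_posSemidef (A : Matrix l l ℝ) (B : Matrix l m ℝ)
    {Q : Matrix l l ℝ} {S : Matrix l m ℝ} {R : Matrix m m ℝ}
    (hPi : (fromBlocks Q S Sᵀ R).PosSemidef) (hR : R.det = 0) :
    (fromBlocks A B Sᵀ R).det = 0 := by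
  obtain ⟨v, hv, hRv⟩ := exists_mulVec_eq_zero_iff.mpr hR
  have hRsymm : Rᵀ = R := by
    simpa [conjTranspose_eq_transpose_of_trivial] using
      (isHermitian_fromBlocks_iff.mp hPi.1).2.2.2.eq
  refine det_fromBlocks_eq_zero_of_vecMul_eq_zero hv ?_ ?_
  · rw [vecMul_transpose, hPi.mulVec_eq_zero_of_fromBlocks hRv]
  · rw [← hRsymm, vecMul_transpose, hRv]

end Blocks

section Pencil

variable {n m : ℕ}

def pencilPerm (n m : ℕ) : (Fin n ⊕ Fin m) ⊕ Fin n ≃ Fin n ⊕ (Fin n ⊕ Fin m) :=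
  (Equiv.sumAssoc _ _ _).trans ((Equiv.refl _).sumCongr (Equiv.sumComm _ _))

theorem Nmat_submatrix_pencilPerm (A Q : Matrix (Fin n) (Fin n) ℝ)
    (B S : Matrix (Fin n) (Fin m) ℝ) (R : Matrix (Fin m) (Fin m) ℝ) :
    (Nmat A Q B S R).submatrix (pencilPerm n m) (pencilPerm n m) =
      fromBlocks (fromBlocks A B Sᵀ R) 0 (fromCols Q S) (-1) := by
  ext i j
  rcases i with (i | i) | i <;> rcases j with (j | j) | j <;>
    simp [Nmat, pencilPerm, fromBlocks, fromCols]

theorem det_Nmat (A Q : Matrix (Fin n) (Fin n) ℝ)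
    (B S : Matrix (Fin n) (Fin m) ℝ) (R : Matrix (Fin m) (Fin m) ℝ) :
    (Nmat A Q B S R).det = (-1) ^ n * (fromBlocks A B Sᵀ R).det := by
  rw [← det_submatrix_equiv_self (pencilPerm n m), Nmat_submatrix_pencilPerm,
    det_fromBlocks_zero₁₂, det_neg, det_one, mul_one, Fintype.card_fin, mul_comm]

end Pencil

theorem stmt_1_general {n m : ℕ}
    (A Q : Matrix (Fin n) (Fin n) ℝ) (B S : Matrix (Fin n) (Fin m) ℝ)
    (R : Matrix (Fin m) (Fin m) ℝ)
    (hPi : (fromBlocks Q S Sᵀ R).PosSemidef) :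
    (Nmat A Q B S R).det = 0 ↔ R.det = 0 ∨ (A - B * mpinv R * Sᵀ).det = 0 := by
  rw [det_Nmat, mul_eq_zero, or_iff_right (pow_ne_zero n (neg_ne_zero.mpr one_ne_zero))]
  by_cases hR : R.det = 0
  · simpa [hR] using det_fromBlocks_eq_zero_of_posSemidef A B hPi hR
  · have hRunit : IsUnit R.det := isUnit_iff_ne_zero.mpr hR
    rw [det_fromBlocks_eq_zero_iff_of_isUnit A B Sᵀ hRunit, mpinv_eq_nonsing_inv hRunit,
      or_iff_right hR]

/-- `N` is singular iff `R` or `A - B R† Sᵀ` is singular. -/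
theorem stmt_1 {n m : ℕ} (hn : 0 < n) (hm : 0 < m)
    (A Q : Matrix (Fin n) (Fin n) ℝ) (B S : Matrix (Fin n) (Fin m) ℝ)
    (R : Matrix (Fin m) (Fin m) ℝ)
    (hPi : (fromBlocks Q S Sᵀ R).PosSemidef) :
    (Nmat A Q B S R).det = 0 ↔ R.det = 0 ∨ (A - B * mpinv R * Sᵀ).det = 0 :=
  stmt_1_general A Q B S R hPi
end

section
/- Let X be a symmetric solution of CGDARE(Σ). Then there exist invertible matrices U_X, V_X ∈ ℝ^{(2n+m)×(2n+m)} such that U_X M V_X = [[I_n, 0, 0], [0, A_Xᵀ, 0], [0, Bᵀ, 0]] and U_X N V_X = [[A_X, 0, B], [0, I_n, 0], [0, 0, R_X]] (equivalently, U_X (N − z M) V_X = [[A_X − z I_n, 0, B], [0, I_n − z A_Xᵀ, 0], [0, −z Bᵀ, R_X]] for every scalar z). -/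
/-! With `K = K_X`, the block lower triangular matrices
`U = [[I, 0, 0], [A_Xᵀ X, I, -Kᵀ], [Bᵀ X, 0, I]]` and `V = [[I, 0, 0], [X, -I, 0], [-K, 0, I]]`
do the job. Multiplying out, the blocks of `U M V` are as claimed outright, and those of `U N V`
once one knows `R_X K = S_Xᵀ`, `Kᵀ R_X = S_X` and the Riccati equation `X = AᵀXA - S_X K + Q`,
which annihilates the `(2,1)` block. The identity `R_X K = S_Xᵀ`, i.e. `R_X R_X† S_Xᵀ = S_Xᵀ`,
is where the kernel condition `ker R_X ⊆ ker S_X` enters. -/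

open Matrix

section MoorePenrose

variable {ι : Type*} [Fintype ι] [DecidableEq ι] {M : Matrix ι ι ℝ}

/-- The witness is `f(M)` for `f x = x⁻¹` (so `f 0 = 0`): the Penrose equations hold pointwise on
the spectrum, because `x * x⁻¹ * x = x` and `x⁻¹ * x * x⁻¹ = x⁻¹` for every real `x`. -/
lemma Matrix.IsSymm.exists_penrose (hM : M.IsSymm) :
    ∃ P : Matrix ι ι ℝ, M * P * M = M ∧ P * M * P = P ∧ (M * P).IsSymm ∧ (P * M).IsSymm := by
  have hM' : M.IsHermitian := isHermitian_iff_isSymm.mpr hM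
  have hcont (f : ℝ → ℝ) : ContinuousOn f (spectrum ℝ M) := M.finite_spectrum.continuousOn f
  have hid : cfc (fun x : ℝ ↦ x) M = M := cfc_id' ℝ M
  have hmul (f g : ℝ → ℝ) : cfc f M * cfc g M = cfc (fun x ↦ f x * g x) M :=
    (cfc_mul f g M (hcont f) (hcont g)).symm
  have hmul_left (f : ℝ → ℝ) : M * cfc f M = cfc (fun x ↦ x * f x) M := by
    rw [← hmul, hid]
  have hmul_right (f : ℝ → ℝ) : cfc f M * M = cfc (fun x ↦ f x * x) M := by
    rw [← hmul, hid]
  have hsymm (f : ℝ → ℝ) : (cfc f M).IsSymm := isHermitian_iff_isSymm.mp (cfc_predicate f M)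
  have hinv (x : ℝ) : x⁻¹ * x * x⁻¹ = x⁻¹ := by simpa only [inv_inv] using mul_inv_mul_cancel x⁻¹
  refine ⟨cfc (fun x : ℝ ↦ x⁻¹) M, ?_, ?_, ?_, ?_⟩
  · simp only [hmul_left, hmul_right, mul_inv_mul_cancel, hid]
  · simp only [hmul_right, hmul, hinv]
  · simp only [hmul_left, hsymm]
  · simp only [hmul_right, hsymm]

lemma Matrix.IsSymm.mpinv_spec (hM : M.IsSymm) :
    M * mpinv M * M = M ∧ mpinv M * M * mpinv M = mpinv M ∧ (M * mpinv M).IsSymm ∧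
      (mpinv M * M).IsSymm := by
  unfold mpinv
  split_ifs with h
  · exact h.choose_spec
  · exact absurd hM.exists_penrose h

end MoorePenrose

section KernelInclusion

variable {𝕜 α β γ δ : Type*} [CommRing 𝕜]

lemma Matrix.mul_eq_zero_of_ker_le [Fintype β] [Fintype δ] {M : Matrix α β 𝕜}
    {S : Matrix γ β 𝕜} (hker : ∀ v, M *ᵥ v = 0 → S *ᵥ v = 0) {N : Matrix β δ 𝕜}
    (hMN : M * N = 0) : S * N = 0 := by
  refine ext_iff_mulVec.mpr fun v ↦ ?_
  rw [← mulVec_mulVec, zero_mulVec]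
  exact hker _ (by rw [mulVec_mulVec, hMN, zero_mulVec])

/-- `M * P` is the orthogonal projection onto the range of `M`, and the kernel inclusion says that
this range contains the range of `Sᵀ`. -/
lemma Matrix.mul_mul_transpose_eq_of_ker_le [Fintype α] [DecidableEq α] [Fintype β]
    {M : Matrix α β 𝕜} {P : Matrix β α 𝕜} {S : Matrix γ α 𝕜} (hMPM : M * P * M = M)
    (hMP : (M * P).IsSymm) (hker : ∀ v, Mᵀ *ᵥ v = 0 → S *ᵥ v = 0) : M * P * Sᵀ = Sᵀ := by
  have hM : Mᵀ * (1 - M * P) = 0 := by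
    rw [← hMP.eq, ← transpose_one, ← transpose_sub, ← transpose_mul, Matrix.sub_mul,
      Matrix.one_mul, hMPM, sub_self, transpose_zero]
  have hS : S * (M * P) = S := by
    have := mul_eq_zero_of_ker_le hker hM
    rwa [Matrix.mul_sub, Matrix.mul_one, sub_eq_zero, eq_comm] at this
  rw [← hMP.eq, ← transpose_mul, hS]

end KernelInclusion

section Riccati

variable {ι κ : Type*} [Fintype ι] [Fintype κ]
  {A X : Matrix ι ι ℝ} {B S : Matrix ι κ ℝ} {R : Matrix κ κ ℝ}

lemma isSymm_RX (hR : R.IsSymm) (hX : X.IsSymm) : (RX R B X).IsSymm :=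
  hR.add (by simp [IsSymm, transpose_mul, hX.eq, Matrix.mul_assoc])

variable [DecidableEq κ]

lemma RX_mul_KX (hR : R.IsSymm) (hX : X.IsSymm) (hker : KerCond A B S R X) :
    RX R B X * KX A B S R X = (SX A B S X)ᵀ := by
  have hRX := isSymm_RX (B := B) hR hX
  obtain ⟨hMPM, -, hMP, -⟩ := hRX.mpinv_spec
  rw [KX, ← Matrix.mul_assoc]
  exact mul_mul_transpose_eq_of_ker_le hMPM hMP (hRX.eq ▸ hker)

lemma transpose_KX_mul_RX (hR : R.IsSymm) (hX : X.IsSymm) (hker : KerCond A B S R X) :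
    (KX A B S R X)ᵀ * RX R B X = SX A B S X := by
  rw [← (isSymm_RX hR hX).eq, ← transpose_mul, RX_mul_KX hR hX hker, transpose_transpose]

end Riccati

section ThreeByThreeBlocks

variable {α : Type*} {l₁ l₂ l₃ m₁ m₂ m₃ n₁ n₂ n₃ : Type*}

def Matrix.fromBlocks₃ (A₁₁ : Matrix l₁ m₁ α) (A₁₂ : Matrix l₁ m₂ α) (A₁₃ : Matrix l₁ m₃ α)
    (A₂₁ : Matrix l₂ m₁ α) (A₂₂ : Matrix l₂ m₂ α) (A₂₃ : Matrix l₂ m₃ α)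
    (A₃₁ : Matrix l₃ m₁ α) (A₃₂ : Matrix l₃ m₂ α) (A₃₃ : Matrix l₃ m₃ α) :
    Matrix (l₁ ⊕ (l₂ ⊕ l₃)) (m₁ ⊕ (m₂ ⊕ m₃)) α :=
  fromBlocks A₁₁ (fromCols A₁₂ A₁₃) (fromRows A₂₁ A₃₁) (fromBlocks A₂₂ A₂₃ A₃₂ A₃₃)

lemma Matrix.fromBlocks₃_inj {A₁₁ B₁₁ : Matrix l₁ m₁ α} {A₁₂ B₁₂ : Matrix l₁ m₂ α}
    {A₁₃ B₁₃ : Matrix l₁ m₃ α} {A₂₁ B₂₁ : Matrix l₂ m₁ α} {A₂₂ B₂₂ : Matrix l₂ m₂ α}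
    {A₂₃ B₂₃ : Matrix l₂ m₃ α} {A₃₁ B₃₁ : Matrix l₃ m₁ α} {A₃₂ B₃₂ : Matrix l₃ m₂ α}
    {A₃₃ B₃₃ : Matrix l₃ m₃ α} :
    fromBlocks₃ A₁₁ A₁₂ A₁₃ A₂₁ A₂₂ A₂₃ A₃₁ A₃₂ A₃₃ =
        fromBlocks₃ B₁₁ B₁₂ B₁₃ B₂₁ B₂₂ B₂₃ B₃₁ B₃₂ B₃₃ ↔
      A₁₁ = B₁₁ ∧ A₁₂ = B₁₂ ∧ A₁₃ = B₁₃ ∧ A₂₁ = B₂₁ ∧ A₂₂ = B₂₂ ∧ A₂₃ = B₂₃ ∧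
        A₃₁ = B₃₁ ∧ A₃₂ = B₃₂ ∧ A₃₃ = B₃₃ := by
  simp only [fromBlocks₃, fromBlocks_inj, fromCols_inj.eq_iff, fromRows_inj.eq_iff]
  tauto

lemma Matrix.fromBlocks₃_mul [Fintype m₁] [Fintype m₂] [Fintype m₃] [NonUnitalNonAssocSemiring α]
    (A₁₁ : Matrix l₁ m₁ α) (A₁₂ : Matrix l₁ m₂ α) (A₁₃ : Matrix l₁ m₃ α)
    (A₂₁ : Matrix l₂ m₁ α) (A₂₂ : Matrix l₂ m₂ α) (A₂₃ : Matrix l₂ m₃ α)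
    (A₃₁ : Matrix l₃ m₁ α) (A₃₂ : Matrix l₃ m₂ α) (A₃₃ : Matrix l₃ m₃ α)
    (B₁₁ : Matrix m₁ n₁ α) (B₁₂ : Matrix m₁ n₂ α) (B₁₃ : Matrix m₁ n₃ α)
    (B₂₁ : Matrix m₂ n₁ α) (B₂₂ : Matrix m₂ n₂ α) (B₂₃ : Matrix m₂ n₃ α)
    (B₃₁ : Matrix m₃ n₁ α) (B₃₂ : Matrix m₃ n₂ α) (B₃₃ : Matrix m₃ n₃ α) :
    fromBlocks₃ A₁₁ A₁₂ A₁₃ A₂₁ A₂₂ A₂₃ A₃₁ A₃₂ A₃₃ *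
        fromBlocks₃ B₁₁ B₁₂ B₁₃ B₂₁ B₂₂ B₂₃ B₃₁ B₃₂ B₃₃ =
      fromBlocks₃
        (A₁₁ * B₁₁ + A₁₂ * B₂₁ + A₁₃ * B₃₁) (A₁₁ * B₁₂ + A₁₂ * B₂₂ + A₁₃ * B₃₂)
        (A₁₁ * B₁₃ + A₁₂ * B₂₃ + A₁₃ * B₃₃)
        (A₂₁ * B₁₁ + A₂₂ * B₂₁ + A₂₃ * B₃₁) (A₂₁ * B₁₂ + A₂₂ * B₂₂ + A₂₃ * B₃₂)
        (A₂₁ * B₁₃ + A₂₂ * B₂₃ + A₂₃ * B₃₃)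
        (A₃₁ * B₁₁ + A₃₂ * B₂₁ + A₃₃ * B₃₁) (A₃₁ * B₁₂ + A₃₂ * B₂₂ + A₃₃ * B₃₂)
        (A₃₁ * B₁₃ + A₃₂ * B₂₃ + A₃₃ * B₃₃) := by
  ext (i | i | i) (j | j | j) <;>
    simp [fromBlocks₃, mul_apply, Fintype.sum_sum_type, add_assoc]

end ThreeByThreeBlocks

section PencilTransformation

variable {n m : ℕ}

noncomputable def pencilLeft (A X : Matrix (Fin n) (Fin n) ℝ) (B : Matrix (Fin n) (Fin m) ℝ)
    (K : Matrix (Fin m) (Fin n) ℝ) :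
    Matrix (Fin n ⊕ (Fin n ⊕ Fin m)) (Fin n ⊕ (Fin n ⊕ Fin m)) ℝ :=
  fromBlocks₃ 1 0 0 ((A - B * K)ᵀ * X) 1 (-Kᵀ) (Bᵀ * X) 0 (1 : Matrix (Fin m) (Fin m) ℝ)

noncomputable def pencilRight (X : Matrix (Fin n) (Fin n) ℝ) (K : Matrix (Fin m) (Fin n) ℝ) :
    Matrix (Fin n ⊕ (Fin n ⊕ Fin m)) (Fin n ⊕ (Fin n ⊕ Fin m)) ℝ :=
  fromBlocks₃ 1 0 0 X (-1) 0 (-K) 0 (1 : Matrix (Fin m) (Fin m) ℝ)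

lemma isUnit_pencilLeft (A X : Matrix (Fin n) (Fin n) ℝ) (B : Matrix (Fin n) (Fin m) ℝ)
    (K : Matrix (Fin m) (Fin n) ℝ) : IsUnit (pencilLeft A X B K) := by
  simp [isUnit_iff_isUnit_det, pencilLeft, fromBlocks₃, det_fromBlocks_zero₁₂]

lemma isUnit_pencilRight (X : Matrix (Fin n) (Fin n) ℝ) (K : Matrix (Fin m) (Fin n) ℝ) :
    IsUnit (pencilRight X K) := by
  simp [isUnit_iff_isUnit_det, pencilRight, fromBlocks₃, det_fromBlocks_zero₁₂, det_neg]

lemma Mmat_eq_fromBlocks₃ (A : Matrix (Fin n) (Fin n) ℝ) (B : Matrix (Fin n) (Fin m) ℝ) :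
    Mmat A B = fromBlocks₃ (1 : Matrix (Fin n) (Fin n) ℝ) 0 0 0 (-Aᵀ) 0 0 (-Bᵀ)
      (0 : Matrix (Fin m) (Fin m) ℝ) := by
  simp [Mmat, fromBlocks₃]

lemma pencilLeft_mul_Mmat_mul_pencilRight (A X : Matrix (Fin n) (Fin n) ℝ)
    (B : Matrix (Fin n) (Fin m) ℝ) (K : Matrix (Fin m) (Fin n) ℝ) :
    pencilLeft A X B K * Mmat A B * pencilRight X K =
      fromBlocks 1 0 0 (fromBlocks (A - B * K)ᵀ 0 Bᵀ 0) := by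
  have hrhs : fromBlocks 1 0 0 (fromBlocks (A - B * K)ᵀ 0 Bᵀ 0) =
      fromBlocks₃ (1 : Matrix (Fin n) (Fin n) ℝ) 0 0 0 (A - B * K)ᵀ 0 0 Bᵀ
        (0 : Matrix (Fin m) (Fin m) ℝ) := by
    simp [fromBlocks₃]
  rw [hrhs, pencilLeft, pencilRight, Mmat_eq_fromBlocks₃, fromBlocks₃_mul, fromBlocks₃_mul,
    fromBlocks₃_inj]
  simp [Matrix.add_mul, sub_eq_neg_add]

lemma pencilLeft_mul_Nmat_mul_pencilRight {A Q X : Matrix (Fin n) (Fin n) ℝ}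
    {B S : Matrix (Fin n) (Fin m) ℝ} {R : Matrix (Fin m) (Fin m) ℝ}
    {K : Matrix (Fin m) (Fin n) ℝ} (hX : X.IsSymm) (hRK : RX R B X * K = (SX A B S X)ᵀ)
    (hKR : Kᵀ * RX R B X = SX A B S X) (hQ : X = Aᵀ * X * A - SX A B S X * K + Q) :
    pencilLeft A X B K * Nmat A Q B S R * pencilRight X K =
      fromBlocks (A - B * K) (fromCols 0 B) 0 (fromBlocks 1 0 0 (RX R B X)) := by
  have hKRK := congrArg (Kᵀ * ·) hRK
  have hrhs : fromBlocks (A - B * K) (fromCols 0 B) 0 (fromBlocks 1 0 0 (RX R B X)) =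
      fromBlocks₃ (A - B * K) 0 B 0 (1 : Matrix (Fin n) (Fin n) ℝ) 0 0 0 (RX R B X) := by
    simp [fromBlocks₃]
  rw [hrhs, pencilLeft, pencilRight, Nmat, ← fromBlocks₃, fromBlocks₃_mul, fromBlocks₃_mul,
    fromBlocks₃_inj]
  simp only [RX, SX, transpose_add, transpose_mul, transpose_transpose, hX.eq] at hRK hKR hKRK hQ ⊢
  simp only [Matrix.mul_assoc, Matrix.add_mul, Matrix.mul_add, Matrix.sub_mul, Matrix.neg_mul,
    Matrix.mul_neg, Matrix.mul_zero, Matrix.zero_mul, Matrix.mul_one, Matrix.one_mul, add_zero,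
    zero_add, mul_one, mul_zero, zero_mul, one_mul, mul_neg, neg_mul, neg_zero, neg_neg,
    neg_add_rev, neg_sub, transpose_sub, transpose_mul, true_and] at hRK hKR hKRK hQ ⊢
  refine ⟨by abel, ?_, ?_, ?_, add_comm _ _⟩
  · linear_combination (norm := abel) -hQ + hKRK
  · linear_combination (norm := abel) -hKR
  · linear_combination (norm := abel) -hRK

end PencilTransformation

theorem stmt_2_general {n m : ℕ}
    (A Q : Matrix (Fin n) (Fin n) ℝ) (B S : Matrix (Fin n) (Fin m) ℝ)
    (R : Matrix (Fin m) (Fin m) ℝ)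
    (hPi : (fromBlocks Q S Sᵀ R).PosSemidef)
    (X : Matrix (Fin n) (Fin n) ℝ) (hX : IsCGDARESolution A Q B S R X) :
    ∃ U V : Matrix (Fin n ⊕ (Fin n ⊕ Fin m)) (Fin n ⊕ (Fin n ⊕ Fin m)) ℝ,
      IsUnit U ∧ IsUnit V ∧
      U * Mmat A B * V = fromBlocks 1 0 0 (fromBlocks (AX A B S R X)ᵀ 0 Bᵀ 0) ∧
      U * Nmat A Q B S R * V =
        fromBlocks (AX A B S R X) (fromCols 0 B) 0 (fromBlocks 1 0 0 (RX R B X)) := by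
  obtain ⟨hXsymm, hRicc, hker⟩ := hX
  have hR : R.IsSymm :=
    isHermitian_iff_isSymm.mp (isHermitian_fromBlocks_iff.mp hPi.isHermitian).2.2.2
  have hQ : X = Aᵀ * X * A - SX A B S X * KX A B S R X + Q := by
    rwa [KX, ← Matrix.mul_assoc]
  exact ⟨_, _, isUnit_pencilLeft A X B _, isUnit_pencilRight X _,
    pencilLeft_mul_Mmat_mul_pencilRight A X B _,
    pencilLeft_mul_Nmat_mul_pencilRight hXsymm (RX_mul_KX hR hXsymm hker)
      (transpose_KX_mul_RX hR hXsymm hker) hQ⟩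

/-- decomposition of the extended symplectic pencil induced by a symmetric
solution `X` of CGDARE(Σ). -/
theorem stmt_2 {n m : ℕ} (hn : 0 < n) (hm : 0 < m)
    (A Q : Matrix (Fin n) (Fin n) ℝ) (B S : Matrix (Fin n) (Fin m) ℝ)
    (R : Matrix (Fin m) (Fin m) ℝ)
    (hPi : (fromBlocks Q S Sᵀ R).PosSemidef)
    (X : Matrix (Fin n) (Fin n) ℝ) (hX : IsCGDARESolution A Q B S R X) :
    ∃ U V : Matrix (Fin n ⊕ (Fin n ⊕ Fin m)) (Fin n ⊕ (Fin n ⊕ Fin m)) ℝ,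
      IsUnit U ∧ IsUnit V ∧
      U * Mmat A B * V = fromBlocks 1 0 0 (fromBlocks (AX A B S R X)ᵀ 0 Bᵀ 0) ∧
      U * Nmat A Q B S R * V =
        fromBlocks (AX A B S R X) (fromCols 0 B) 0 (fromBlocks 1 0 0 (RX R B X)) :=
  stmt_2_general A Q B S R hPi X hX
end

section
/- Let X be a symmetric solution of CGDARE(Σ) such that R_X is invertible. Then the closed-loop matrix A_X is singular if and only if at least one of the two matrices R and A − B R† Sᵀ is singular. -/
open Matrix

/-!
Both `det A_X · det R_X` and `det (A - B R† Sᵀ) · det R` equal `det [[A, B], [Sᵀ, R]]`.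
For the first, add `BᵀX` times the first block row to the second, which turns the matrix into
`[[A, B], [S_Xᵀ, R_X]]`, and take the Schur complement of the invertible `R_X`. For the second,
positivity of the Popov matrix gives `ker R ⊆ ker S`, hence `R R† Sᵀ = Sᵀ`, and this identity is
all a Schur complement with respect to `R` needs, with `R†` in place of an inverse.
-/

namespace Matrix

def IsPenroseInverse {α β : Type*} [Fintype α] [Fintype β]
    (M : Matrix α β ℝ) (P : Matrix β α ℝ) : Prop :=
  M * P * M = M ∧ P * M * P = P ∧ (M * P)ᵀ = M * P ∧ (P * M)ᵀ = P * M

lemma isPenroseInverse_mpinv {α β : Type*} [Fintype α] [Fintype β] {M : Matrix α β ℝ}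
    (h : ∃ P, IsPenroseInverse M P) : IsPenroseInverse M (mpinv M) := by
  have h' : ∃ P : Matrix β α ℝ,
      M * P * M = M ∧ P * M * P = P ∧ (M * P)ᵀ = M * P ∧ (P * M)ᵀ = P * M := h
  rw [mpinv, dif_pos h']
  exact h'.choose_spec

lemma IsPenroseInverse.map {κ F : Type*} [Fintype κ]
    [FunLike F (Matrix κ κ ℝ) (Matrix κ κ ℝ)] [MulHomClass F _ _] [StarHomClass F _ _] (φ : F)
    {M P : Matrix κ κ ℝ} (h : IsPenroseInverse M P) : IsPenroseInverse (φ M) (φ P) := by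
  have map_transpose (x : Matrix κ κ ℝ) : (φ x)ᵀ = φ xᵀ := by
    simpa only [star_eq_conjTranspose, conjTranspose_eq_transpose_of_trivial] using
      (map_star φ x).symm
  obtain ⟨h₁, h₂, h₃, h₄⟩ := h
  refine ⟨?_, ?_, ?_, ?_⟩ <;> simp only [← map_mul, map_transpose, h₁, h₂, h₃, h₄]

lemma isPenroseInverse_diagonal {κ : Type*} [Fintype κ] [DecidableEq κ] (d : κ → ℝ) :
    IsPenroseInverse (diagonal d) (diagonal d⁻¹) := by
  -- `0⁻¹ = 0` makes `d⁻¹` the pseudoinverse of `d` entrywise, zero entries included.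
  have inv_mul_mul_inv (a : ℝ) : a⁻¹ * a * a⁻¹ = a⁻¹ := by simpa using mul_inv_mul_cancel a⁻¹
  refine ⟨?_, ?_, ?_, ?_⟩ <;> simp [diagonal_mul_diagonal, inv_mul_mul_inv]

lemma IsHermitian.exists_isPenroseInverse {κ : Type*} [Fintype κ] [DecidableEq κ]
    {M : Matrix κ κ ℝ} (hM : M.IsHermitian) : ∃ P, IsPenroseInverse M P := by
  rw [hM.spectral_theorem]
  exact ⟨_, (isPenroseInverse_diagonal _).map _⟩

lemma mul_mpinv_of_isUnit {κ : Type*} [Fintype κ] [DecidableEq κ] {M : Matrix κ κ ℝ}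
    (hM : IsUnit M) : M * mpinv M = 1 := by
  have hdet := (isUnit_iff_isUnit_det M).mp hM
  have h := (isPenroseInverse_mpinv (M := M) ⟨M⁻¹, by
    simp [IsPenroseInverse, mul_nonsing_inv M hdet, nonsing_inv_mul M hdet]⟩).1
  exact hM.mul_eq_right.mp h

open scoped ComplexOrder in
lemma PosSemidef.mulVec_eq_zero_of_fromBlocks_s4 {𝕜 ι κ : Type*} [RCLike 𝕜] [Fintype ι] [Fintype κ]
    {A : Matrix ι ι 𝕜} {B : Matrix ι κ 𝕜} {C : Matrix κ ι 𝕜} {D : Matrix κ κ 𝕜}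
    (h : (fromBlocks A B C D).PosSemidef) {v : κ → 𝕜} (hv : D *ᵥ v = 0) : B *ᵥ v = 0 := by
  have hmul : fromBlocks A B C D *ᵥ Sum.elim 0 v = Sum.elim (B *ᵥ v) 0 := by
    simp [fromBlocks_mulVec, hv]
  have hquad : star (Sum.elim 0 v) ⬝ᵥ fromBlocks A B C D *ᵥ Sum.elim 0 v = 0 := by
    simp [hmul, dotProduct, Fintype.sum_sum_type]
  have hzero := (h.dotProduct_mulVec_zero_iff _).mp hquad
  rw [hmul] at hzero
  exact funext fun i => congrFun hzero (Sum.inl i)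

lemma mul_eq_zero_of_ker_le_s4 {R : Type*} [Semiring R] {ι κ μ ν : Type*} [Fintype μ] [Fintype ν]
    {D : Matrix κ ν R} {B : Matrix ι ν R} {E : Matrix ν μ R}
    (hker : ∀ v, D *ᵥ v = 0 → B *ᵥ v = 0) (hE : D * E = 0) : B * E = 0 := by
  refine ext_iff_mulVec.mpr fun v => ?_
  rw [zero_mulVec, ← mulVec_mulVec]
  exact hker _ (by rw [mulVec_mulVec, hE, zero_mulVec])

lemma mul_mpinv_mul_transpose_of_ker_le {ι κ : Type*} [Fintype κ] [DecidableEq κ]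
    {R : Matrix κ κ ℝ} {S : Matrix ι κ ℝ} (hR : R.IsHermitian)
    (hker : ∀ v, R *ᵥ v = 0 → S *ᵥ v = 0) : R * mpinv R * Sᵀ = Sᵀ := by
  obtain ⟨h₁, -, h₃, -⟩ := isPenroseInverse_mpinv hR.exists_isPenroseInverse
  have hRt : Rᵀ = R := by rwa [IsHermitian, conjTranspose_eq_transpose_of_trivial] at hR
  -- `E` is the orthogonal projection onto `ker R`.
  set E := 1 - R * mpinv R
  have hEt : Eᵀ = E := by rw [transpose_sub, transpose_one, h₃]
  have hER : E * R = 0 := by rw [sub_mul, one_mul, h₁, sub_self]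
  have hRE : R * E = 0 := by
    simpa only [transpose_mul, hEt, hRt, transpose_zero] using congrArg transpose hER
  have hES : E * Sᵀ = 0 := by
    simpa only [transpose_mul, hEt, transpose_zero] using
      congrArg transpose (mul_eq_zero_of_ker_le_s4 hker hRE)
  rwa [Matrix.sub_mul, Matrix.one_mul, sub_eq_zero, eq_comm] at hES

section BlockDeterminant

variable {R ι κ : Type*} [CommRing R] [Fintype ι] [Fintype κ] [DecidableEq ι] [DecidableEq κ]

lemma det_fromBlocks_add_mul_left (A : Matrix ι ι R) (B : Matrix ι κ R) (C : Matrix κ ι R)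
    (D : Matrix κ κ R) (E : Matrix κ ι R) :
    (fromBlocks A B (C + E * A) (D + E * B)).det = (fromBlocks A B C D).det := by
  have : fromBlocks 1 0 E 1 * fromBlocks A B C D = fromBlocks A B (C + E * A) (D + E * B) := by
    simp [fromBlocks_multiply, add_comm]
  rw [← this, det_mul, det_fromBlocks_zero₁₂, det_one, det_one, one_mul, one_mul]

lemma det_fromBlocks_of_mul_mul_eq {A : Matrix ι ι R} {B : Matrix ι κ R} {C : Matrix κ ι R}
    {D : Matrix κ κ R} {P : Matrix κ κ R} (h : D * P * C = C) :
    (fromBlocks A B C D).det = (A - B * P * C).det * D.det := by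
  have : fromBlocks A B C D * fromBlocks 1 0 (-(P * C)) 1 = fromBlocks (A - B * P * C) B 0 D := by
    simp [fromBlocks_multiply, ← Matrix.mul_assoc, h, sub_eq_add_neg]
  rw [← det_fromBlocks_zero₂₁, ← this, det_mul, det_fromBlocks_zero₁₂, det_one, det_one, mul_one,
    mul_one]

end BlockDeterminant

end Matrix

section Riccati

variable {ι κ : Type*} [Fintype ι] [Fintype κ] [DecidableEq ι] [DecidableEq κ]
  {A Q : Matrix ι ι ℝ} {B S : Matrix ι κ ℝ} {R : Matrix κ κ ℝ} {X : Matrix ι ι ℝ}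

lemma det_fromBlocks_transpose_SX_RX (hX : Xᵀ = X) :
    (fromBlocks A B (SX A B S X)ᵀ (RX R B X)).det = (fromBlocks A B Sᵀ R).det := by
  have hSX : (SX A B S X)ᵀ = Sᵀ + Bᵀ * X * A := by
    rw [SX, transpose_add, transpose_mul, transpose_mul, transpose_transpose, hX, add_comm,
      Matrix.mul_assoc]
  rw [hSX, RX, det_fromBlocks_add_mul_left]

lemma det_AX_mul_det_RX (hX : Xᵀ = X) (hRX : IsUnit (RX R B X)) :
    (AX A B S R X).det * (RX R B X).det = (fromBlocks A B Sᵀ R).det := by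
  have hSchur : RX R B X * mpinv (RX R B X) * (SX A B S X)ᵀ = (SX A B S X)ᵀ := by
    rw [mul_mpinv_of_isUnit hRX, Matrix.one_mul]
  rw [← det_fromBlocks_transpose_SX_RX hX, det_fromBlocks_of_mul_mul_eq hSchur, AX, KX,
    Matrix.mul_assoc]

lemma det_fromBlocks_of_posSemidef_popov (hPi : (fromBlocks Q S Sᵀ R).PosSemidef) :
    (fromBlocks A B Sᵀ R).det = (A - B * mpinv R * Sᵀ).det * R.det := by
  have hR : R.IsHermitian := (isHermitian_fromBlocks_iff.mp hPi.isHermitian).2.2.2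
  exact det_fromBlocks_of_mul_mul_eq <|
    mul_mpinv_mul_transpose_of_ker_le hR fun _ => hPi.mulVec_eq_zero_of_fromBlocks_s4

end Riccati

theorem stmt_4_general {n m : ℕ}
    (A Q : Matrix (Fin n) (Fin n) ℝ) (B S : Matrix (Fin n) (Fin m) ℝ)
    (R : Matrix (Fin m) (Fin m) ℝ)
    (hPi : (fromBlocks Q S Sᵀ R).PosSemidef)
    (X : Matrix (Fin n) (Fin n) ℝ) (hX : IsCGDARESolution A Q B S R X)
    (hRX : IsUnit (RX R B X)) :
    (AX A B S R X).det = 0 ↔ R.det = 0 ∨ (A - B * mpinv R * Sᵀ).det = 0 := by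
  have hdet : (RX R B X).det ≠ 0 := ((isUnit_iff_isUnit_det _).mp hRX).ne_zero
  rw [← mul_eq_zero_iff_right hdet, det_AX_mul_det_RX hX.1 hRX,
    det_fromBlocks_of_posSemidef_popov hPi, mul_eq_zero, or_comm]

/-- if `X` solves CGDARE(Σ) with `R_X` invertible, then `A_X` is singular iff
`R` or `A - B R† Sᵀ` is singular. -/
theorem stmt_4 {n m : ℕ} (hn : 0 < n) (hm : 0 < m)
    (A Q : Matrix (Fin n) (Fin n) ℝ) (B S : Matrix (Fin n) (Fin m) ℝ)
    (R : Matrix (Fin m) (Fin m) ℝ)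
    (hPi : (fromBlocks Q S Sᵀ R).PosSemidef)
    (X : Matrix (Fin n) (Fin n) ℝ) (hX : IsCGDARESolution A Q B S R X)
    (hRX : IsUnit (RX R B X)) :
    (AX A B S R X).det = 0 ↔ R.det = 0 ∨ (A - B * mpinv R * Sᵀ).det = 0 :=
  stmt_4_general A Q B S R hPi X hX hRX
end
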